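/- arXiv:2407.04912 — 3 statements merged into one kernel-verified Lean document; each statement's English description precedes it below -/
import Mathlib

section
/- For a perfect pair (p, q) in a monomial algebra Λ = KQ/I, the sequence 0 → qΛ → e_{t(p)}Λ → pΛ → 0 is a short exact sequence of right Λ-modules, where the first map is the canonical inclusion and the second map is left multiplication by p. -/
/-! Combinatorial model of a monomial algebra `Λ = KQ/I`.

A finite quiver is given by source and target maps on a type of arrows.
A (nontrivial) path is encoded as a nonempty list of composable arrows;
the admissible monomial ideal `I` is encoded by its set `F` of minimal
generating paths, and a path is zero in `Λ` iff it contains a member of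
`F` as a contiguous subpath (infix). -/

/-- A quiver structure on arrow type `E` with vertex type `V`. -/
structure QuiverData (V E : Type) where
  src : E → V
  tgt : E → V

namespace QuiverData

variable {V E : Type} (Q : QuiverData V E)

/-- `l` is the list of arrows of a path of `Q`. -/
def IsPath (l : List E) : Prop := l.Chain' fun a b => Q.tgt a = Q.src b

/-- Two paths are composable: the target of the first equals the source of
the second (vacuously true if one of them is trivial). -/
def Composable (l m : List E) : Prop :=
  ∀ a ∈ l.getLast?, ∀ b ∈ m.head?, Q.tgt a = Q.src b

end QuiverData

/-- A monomial algebra, encoded combinatorially: a finite quiver together with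
the set `F` of minimal paths generating the admissible monomial ideal `I`. -/
structure MonomialData (V E : Type) extends QuiverData V E where
  F : Set (List E)
  F_path : ∀ f ∈ F, toQuiverData.IsPath f
  F_len : ∀ f ∈ F, 2 ≤ f.length
  F_min : ∀ f ∈ F, ∀ g, g <:+: f → (∃ f' ∈ F, f' <:+: g) → g = f
  admissible : ∃ N, ∀ l, toQuiverData.IsPath l → N ≤ l.length → ∃ f ∈ F, f <:+: l

namespace MonomialData

variable {V E : Type} (M : MonomialData V E)

/-- The path `l` is zero in `Λ`. -/
def IsZero (l : List E) : Prop := ∃ f ∈ M.F, f <:+: l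

/-- `l` is a path which is nonzero in `Λ`. -/
def Nonzero (l : List E) : Prop := M.toQuiverData.IsPath l ∧ ¬ M.IsZero l

/-- A perfect pair of nonzero nontrivial paths, after Chen–Shen–Zhou. -/
def PerfectPair (p q : List E) : Prop :=
  p ≠ [] ∧ q ≠ [] ∧ M.Nonzero p ∧ M.Nonzero q ∧
  M.toQuiverData.Composable p q ∧ M.IsZero (p ++ q) ∧
  (∀ q', q' ≠ [] → M.Nonzero q' → M.toQuiverData.Composable p q' →
      M.IsZero (p ++ q') → q <+: q') ∧
  (∀ p', p' ≠ [] → M.Nonzero p' → M.toQuiverData.Composable p' q →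
      M.IsZero (p' ++ q) → p <:+ p')

/-- A perfect path: a path appearing in a perfect path sequence
`(p₁, …, pₙ, pₙ₊₁ = p₁)`, encoded by a periodic sequence of paths each of
whose consecutive pairs is perfect. -/
def IsPerfect (p : List E) : Prop :=
  ∃ (n : ℕ) (s : ℕ → List E), 0 < n ∧ s 0 = p ∧ (∀ i, s (i + n) = s i) ∧
    ∀ i, M.PerfectPair (s i) (s (i + 1))

/-- `c` is the underlying cycle associated with the perfect path `p`:
the shortest cycle `c` with `p₁ ⋯ pₙ = cˡ` for some `l > 0`, for a perfect
path sequence through `p`. -/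
def IsUnderlyingCycleOf (c p : List E) : Prop :=
  ∃ (n : ℕ) (s : ℕ → List E), 0 < n ∧ s 0 = p ∧ (∀ i, s (i + n) = s i) ∧
    (∀ i, M.PerfectPair (s i) (s (i + 1))) ∧
    (∃ l, 0 < l ∧ ((List.range n).map s).flatten = (List.replicate l c).flatten) ∧
    (∀ c' l', 0 < l' → ((List.range n).map s).flatten = (List.replicate l' c').flatten →
      c.length ≤ c'.length)


/-- There is an overlap between the perfect paths `p` and `q` (`p` overlaps `q`). -/
def Overlap (p q : List E) : Prop :=
  ∃ x p' q' : List E, x ≠ [] ∧ p = p' ++ x ∧ q = x ++ q' ∧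
    M.Nonzero (p' ++ x ++ q') ∧ (p = q → p' ≠ [] ∧ q' ≠ [])

/-- An elementary perfect path: a source in the Hasse quiver of the left
divisibility order `⪯` on perfect paths, i.e. it is not a proper left divisor
of any perfect path. -/
def Elementary (p : List E) : Prop :=
  M.IsPerfect p ∧ ¬ ∃ q, M.IsPerfect q ∧ p <+: q ∧ p ≠ q

/-- A co-elementary perfect path: a sink in the Hasse quiver of `⪯`, i.e.
no proper left divisor of it is perfect. -/
def CoElementary (p : List E) : Prop :=
  M.IsPerfect p ∧ ¬ ∃ q, M.IsPerfect q ∧ q <+: p ∧ q ≠ p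

/-- There is an arrow `q ⟶ p` in the Hasse quiver of `(ℙ_Λ, ⪯)`:
`p ≺ q` and no perfect path lies strictly between them. -/
def HasseArrowPrec (q p : List E) : Prop :=
  M.IsPerfect p ∧ M.IsPerfect q ∧ p <+: q ∧ p ≠ q ∧
    ¬ ∃ r, M.IsPerfect r ∧ p <+: r ∧ p ≠ r ∧ r <+: q ∧ r ≠ q

end MonomialData

/-- Two cycles are equivalent (agree up to cyclic permutation): each is a
subpath of a power of the other. -/
def CyclesEquiv {E : Type} (c d : List E) : Prop :=
  ∃ m k, 0 < m ∧ 0 < k ∧ c <:+: (List.replicate m d).flatten ∧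
    d <:+: (List.replicate k c).flatten


/-! The monomial algebra `Λ = KQ/I` itself, realized as the quotient of the
free algebra on `V ⊕ E` by the path-algebra relations together with the
monomial relations `F`. -/

section AlgebraModel

open scoped BigOperators

variable (K : Type) [Field K] {V E : Type} [Fintype V]

/-- The defining relations of the monomial algebra `KQ/I` inside the free
algebra on vertices and arrows. -/
inductive PathAlgRel (M : MonomialData V E) :
    FreeAlgebra K (V ⊕ E) → FreeAlgebra K (V ⊕ E) → Prop
  | vert_same (v : V) :
      PathAlgRel M (FreeAlgebra.ι K (Sum.inl v) * FreeAlgebra.ι K (Sum.inl v))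
        (FreeAlgebra.ι K (Sum.inl v))
  | vert_ne (v w : V) (h : v ≠ w) :
      PathAlgRel M (FreeAlgebra.ι K (Sum.inl v) * FreeAlgebra.ι K (Sum.inl w)) 0
  | sum_one :
      PathAlgRel M (∑ v : V, FreeAlgebra.ι K (Sum.inl v)) 1
  | src_mul (e : E) :
      PathAlgRel M (FreeAlgebra.ι K (Sum.inl (M.toQuiverData.src e)) *
        FreeAlgebra.ι K (Sum.inr e)) (FreeAlgebra.ι K (Sum.inr e))
  | mul_tgt (e : E) :
      PathAlgRel M (FreeAlgebra.ι K (Sum.inr e) *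
        FreeAlgebra.ι K (Sum.inl (M.toQuiverData.tgt e)))
        (FreeAlgebra.ι K (Sum.inr e))
  | rel (l : List E) (h : l ∈ M.F) :
      PathAlgRel M ((l.map fun e => FreeAlgebra.ι K (Sum.inr e)).prod) 0

/-- The monomial algebra `Λ = KQ/I`. -/
abbrev PathAlg (M : MonomialData V E) : Type := RingQuot (PathAlgRel K M)

/-- The image in `Λ` of an arrow `e`. -/
def arrowElem (M : MonomialData V E) (e : E) : PathAlg K M :=
  RingQuot.mkAlgHom K (PathAlgRel K M) (FreeAlgebra.ι K (Sum.inr e))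

/-- The trivial path `e_v` at the vertex `v`, as an element of `Λ`. -/
def vertElem (M : MonomialData V E) (v : V) : PathAlg K M :=
  RingQuot.mkAlgHom K (PathAlgRel K M) (FreeAlgebra.ι K (Sum.inl v))

/-- The image in `Λ` of a path, given by its list of arrows. -/
def pathElem (M : MonomialData V E) (l : List E) : PathAlg K M :=
  (l.map (arrowElem K M)).prod

/-- The degree-`i` component `Λ_i` of `Λ` for the grading with every arrow in
degree one (`Λ_0` is spanned by the trivial paths; `Λ_i = 0` for `i < 0`). -/
def degSub (M : MonomialData V E) (i : ℤ) : Submodule K (PathAlg K M) :=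
  if i = 0 then Submodule.span K (Set.range (vertElem K M))
  else Submodule.span K
    {x | ∃ l : List E, M.toQuiverData.IsPath l ∧ (l.length : ℤ) = i ∧
      x = pathElem K M l}

/-- The cyclic right ideal `xΛ` generated by `x`, as a `K`-subspace of `Λ`. -/
def cycIdeal (M : MonomialData V E) (x : PathAlg K M) :
    Submodule K (PathAlg K M) :=
  Submodule.span K {y | ∃ a, y = x * a}

end AlgebraModel

/-! The nonzero paths `e_v l` form a `K`-basis of `Λ`: they span since left multiplication by a
vertex or an arrow sends such a path to another one or to zero, and they are linearly independent
since `Λ` acts by the same rule on the vector space they freely generate. Left multiplication by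
`p` sends a nonzero path `l` starting at `t(p)` either to the nonzero path `pl`, injectively in `l`,
or to zero, and by (P2) the second case happens exactly when `q` is a left divisor of `l`. So the
component in `qΛ` of an element of `e_{t(p)}Λ` is killed by `p`, while the complementary component
is killed only if it vanishes. -/

theorem LinearIndepOn.eq_zero_of_map_eq_zero {R M N ι : Type*} [Ring R] [AddCommGroup M]
    [Module R M] [AddCommGroup N] [Module R N] {v : ι → M} {s : Set ι} {f : M →ₗ[R] N}
    (h : LinearIndepOn R (f ∘ v) s) {x : M} (hx : x ∈ Submodule.span R (v '' s))
    (hfx : f x = 0) : x = 0 := by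
  obtain ⟨c, hc, rfl⟩ := (Finsupp.mem_span_image_iff_linearCombination R).mp hx
  rw [linearIndepOn_iff.mp h c hc (by rwa [← Finsupp.apply_linearCombination]), map_zero]

section Relations

variable (K : Type) [Field K] {V E : Type} [Fintype V] (M : MonomialData V E)

theorem pathElem_cons (e : E) (l : List E) :
    pathElem K M (e :: l) = arrowElem K M e * pathElem K M l :=
  List.prod_cons

theorem pathElem_append (l m : List E) :
    pathElem K M (l ++ m) = pathElem K M l * pathElem K M m := by
  simp [pathElem]

theorem pathElem_singleton (e : E) : pathElem K M [e] = arrowElem K M e := by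
  simp [pathElem]

theorem pathElem_eq_mkAlgHom (l : List E) :
    pathElem K M l = RingQuot.mkAlgHom K (PathAlgRel K M)
      (l.map fun e => FreeAlgebra.ι K (Sum.inr e)).prod := by
  rw [map_list_prod, List.map_map]
  rfl

theorem vertElem_mul_self (v : V) : vertElem K M v * vertElem K M v = vertElem K M v := by
  rw [vertElem, ← map_mul]
  exact RingQuot.mkAlgHom_rel K (PathAlgRel.vert_same v)

theorem vertElem_mul_of_ne {v w : V} (h : v ≠ w) : vertElem K M v * vertElem K M w = 0 := by
  rw [vertElem, vertElem, ← map_mul, ← map_zero (RingQuot.mkAlgHom K (PathAlgRel K M))]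
  exact RingQuot.mkAlgHom_rel K (PathAlgRel.vert_ne v w h)

theorem sum_vertElem : ∑ v : V, vertElem K M v = 1 := by
  simp_rw [vertElem, ← map_sum, ← map_one (RingQuot.mkAlgHom K (PathAlgRel K M))]
  exact RingQuot.mkAlgHom_rel K PathAlgRel.sum_one

theorem vertElem_src_mul_arrowElem (e : E) :
    vertElem K M (M.src e) * arrowElem K M e = arrowElem K M e := by
  rw [vertElem, arrowElem, ← map_mul]
  exact RingQuot.mkAlgHom_rel K (PathAlgRel.src_mul e)

theorem arrowElem_mul_vertElem_tgt (e : E) :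
    arrowElem K M e * vertElem K M (M.tgt e) = arrowElem K M e := by
  rw [vertElem, arrowElem, ← map_mul]
  exact RingQuot.mkAlgHom_rel K (PathAlgRel.mul_tgt e)

theorem pathElem_eq_zero_of_mem_F {f : List E} (hf : f ∈ M.F) : pathElem K M f = 0 := by
  rw [pathElem_eq_mkAlgHom, ← map_zero (RingQuot.mkAlgHom K (PathAlgRel K M))]
  exact RingQuot.mkAlgHom_rel K (PathAlgRel.rel f hf)

theorem vertElem_mul_arrowElem_of_ne {v : V} {e : E} (h : v ≠ M.src e) :
    vertElem K M v * arrowElem K M e = 0 := by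
  rw [← vertElem_src_mul_arrowElem, ← mul_assoc, vertElem_mul_of_ne K M h, zero_mul]

theorem arrowElem_mul_vertElem_of_ne {v : V} {e : E} (h : M.tgt e ≠ v) :
    arrowElem K M e * vertElem K M v = 0 := by
  rw [← arrowElem_mul_vertElem_tgt, mul_assoc, vertElem_mul_of_ne K M h, mul_zero]

theorem arrowElem_mul_arrowElem_of_ne {e f : E} (h : M.tgt e ≠ M.src f) :
    arrowElem K M e * arrowElem K M f = 0 := by
  rw [← arrowElem_mul_vertElem_tgt, mul_assoc, vertElem_mul_arrowElem_of_ne K M h, mul_zero]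

theorem pathElem_eq_zero_of_isZero {l : List E} (h : M.IsZero l) : pathElem K M l = 0 := by
  obtain ⟨f, hf, s, t, rfl⟩ := h
  rw [pathElem_append, pathElem_append, pathElem_eq_zero_of_mem_F K M hf, mul_zero, zero_mul]

theorem pathElem_eq_zero_of_not_isPath :
    ∀ {l : List E}, ¬ M.IsPath l → pathElem K M l = 0
  | [], h => (h List.isChain_nil).elim
  | [a], h => (h (List.isChain_singleton a)).elim
  | a :: b :: t, h => by
    rw [pathElem_cons, pathElem_cons, ← mul_assoc]
    by_cases hab : M.tgt a = M.src b
    · have ht : ¬ M.IsPath (b :: t) := fun hp => h (List.isChain_cons_cons.mpr ⟨hab, hp⟩)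
      rw [mul_assoc, ← pathElem_cons, pathElem_eq_zero_of_not_isPath ht, mul_zero]
    · rw [arrowElem_mul_arrowElem_of_ne K M hab, zero_mul]

theorem pathElem_eq_zero_of_not_nonzero {l : List E} (h : ¬ M.Nonzero l) :
    pathElem K M l = 0 := by
  by_cases hl : M.IsPath l
  · exact pathElem_eq_zero_of_isZero K M (not_not.mp fun hz => h ⟨hl, hz⟩)
  · exact pathElem_eq_zero_of_not_isPath K M hl

theorem vertElem_src_mul_pathElem_cons (e : E) (l : List E) :
    vertElem K M (M.src e) * pathElem K M (e :: l) = pathElem K M (e :: l) := by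
  rw [pathElem_cons, ← mul_assoc, vertElem_src_mul_arrowElem]

theorem pathElem_mul_vertElem_of_getLast? {p : List E} {v : V}
    (hv : p.getLast?.map M.tgt = some v) : pathElem K M p * vertElem K M v = pathElem K M p := by
  obtain ⟨p', b, rfl⟩ := p.eq_nil_or_concat'.resolve_left (by rintro rfl; simp at hv)
  obtain rfl : M.tgt b = v := by simpa using hv
  rw [pathElem_append, pathElem_singleton, mul_assoc, arrowElem_mul_vertElem_tgt]

end Relations

theorem QuiverData.composable_of_tgt_eq_src {V E : Type} {Q : QuiverData V E} {p l : List E}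
    {v : V} (hp : p.getLast?.map Q.tgt = some v) (hl : ∀ e ∈ l.head?, Q.src e = v) :
    Q.Composable p l := by
  intro a ha b hb
  rw [Option.mem_def] at ha
  rw [hl b hb]
  simpa [ha] using hp

namespace MonomialData

variable {V E : Type}

theorem Nonzero.infix {M : MonomialData V E} {l₁ l₂ : List E} (h : M.Nonzero l₂)
    (hi : l₁ <:+: l₂) : M.Nonzero l₁ :=
  ⟨h.1.infix hi, fun ⟨f, hf, hff⟩ => h.2 ⟨f, hf, hff.trans hi⟩⟩

/-- The nonzero paths of `Λ`, trivial ones included: `(v, l)` stands for `e_v l`. -/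
def nonzeroPaths (M : MonomialData V E) : Set (V × List E) :=
  {i | M.Nonzero i.2 ∧ ∀ e ∈ i.2.head?, M.src e = i.1}

end MonomialData

section PathBasis

variable (K : Type) [Field K] {V E : Type} [Fintype V] (M : MonomialData V E)

def pathAt (i : V × List E) : PathAlg K M := vertElem K M i.1 * pathElem K M i.2

theorem pathAt_nil (v : V) : pathAt K M (v, []) = vertElem K M v := mul_one _

theorem pathAt_src_cons (e : E) (l : List E) :
    pathAt K M (M.src e, e :: l) = pathElem K M (e :: l) :=
  vertElem_src_mul_pathElem_cons K M e l

theorem pathAt_eq_pathElem {v : V} {l : List E} (hl : l ≠ []) (hv : ∀ e ∈ l.head?, M.src e = v) :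
    pathAt K M (v, l) = pathElem K M l := by
  obtain ⟨e, l, rfl⟩ := List.exists_cons_of_ne_nil hl
  obtain rfl := hv e rfl
  exact pathAt_src_cons K M e l

theorem pathAt_eq_zero {i : V × List E} (hi : i ∉ M.nonzeroPaths) : pathAt K M i = 0 := by
  obtain ⟨v, l⟩ := i
  by_cases hl : M.Nonzero l
  · have hl0 : l ≠ [] := by
      rintro rfl
      exact hi ⟨hl, by simp⟩
    obtain ⟨e, l, rfl⟩ := List.exists_cons_of_ne_nil hl0
    have hv : v ≠ M.src e := fun h => hi ⟨hl, by simp [h]⟩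
    rw [pathAt, pathElem_cons, ← mul_assoc, vertElem_mul_arrowElem_of_ne K M hv, zero_mul]
  · rw [pathAt, pathElem_eq_zero_of_not_nonzero K M hl, mul_zero]

theorem vertElem_mul_pathAt [DecidableEq V] (u : V) (i : V × List E) :
    vertElem K M u * pathAt K M i = if u = i.1 then pathAt K M i else 0 := by
  rw [pathAt, ← mul_assoc]
  split_ifs with h
  · rw [h, vertElem_mul_self]
  · rw [vertElem_mul_of_ne K M h, zero_mul]

theorem arrowElem_mul_pathAt [DecidableEq V] (e : E) (i : V × List E) :
    arrowElem K M e * pathAt K M i =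
      if M.tgt e = i.1 then pathAt K M (M.src e, e :: i.2) else 0 := by
  rw [pathAt, ← mul_assoc]
  split_ifs with h
  · rw [← h, arrowElem_mul_vertElem_tgt, pathAt_src_cons, pathElem_cons]
  · rw [arrowElem_mul_vertElem_of_ne K M h, zero_mul]

theorem pathAt_mem_span (i : V × List E) :
    pathAt K M i ∈ Submodule.span K (pathAt K M '' M.nonzeroPaths) := by
  by_cases hi : i ∈ M.nonzeroPaths
  · exact Submodule.subset_span ⟨i, hi, rfl⟩
  · rw [pathAt_eq_zero K M hi]
    exact Submodule.zero_mem _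

theorem span_pathAt_nonzeroPaths :
    Submodule.span K (pathAt K M '' M.nonzeroPaths) = ⊤ := by
  classical
  set N := Submodule.span K (pathAt K M '' M.nonzeroPaths)
  have hgen : ∀ g : V ⊕ E, ∀ n ∈ N,
      RingQuot.mkAlgHom K (PathAlgRel K M) (FreeAlgebra.ι K g) * n ∈ N := by
    intro g n hn
    refine (Submodule.map_span_le (LinearMap.mulLeft K _) _ N).mpr ?_ ⟨n, hn, rfl⟩
    rintro _ ⟨i, -, rfl⟩
    rcases g with u | e
    · change vertElem K M u * _ ∈ N
      rw [vertElem_mul_pathAt]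
      split_ifs
      exacts [pathAt_mem_span K M i, N.zero_mem]
    · change arrowElem K M e * _ ∈ N
      rw [arrowElem_mul_pathAt]
      split_ifs
      exacts [pathAt_mem_span K M _, N.zero_mem]
  have hmul : ∀ x, ∀ n ∈ N, x * n ∈ N := by
    intro x
    obtain ⟨y, rfl⟩ := RingQuot.mkAlgHom_surjective K (PathAlgRel K M) x
    induction y using FreeAlgebra.induction with
    | grade0 r =>
      intro n hn
      rw [AlgHom.commutes, Algebra.algebraMap_eq_smul_one, smul_mul_assoc, one_mul]
      exact N.smul_mem r hn
    | grade1 g => exact hgen g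
    | mul a b ha hb =>
      intro n hn
      rw [map_mul, mul_assoc]
      exact ha _ (hb n hn)
    | add a b ha hb =>
      intro n hn
      rw [map_add, add_mul]
      exact N.add_mem (ha n hn) (hb n hn)
  have hone : (1 : PathAlg K M) ∈ N := by
    rw [← sum_vertElem]
    exact N.sum_mem fun v _ => pathAt_nil K M v ▸ pathAt_mem_span K M (v, [])
  exact eq_top_iff.mpr fun x _ => mul_one x ▸ hmul x 1 hone

theorem vertElem_mul_mem_span_pathAt (v : V) (y : PathAlg K M) :
    vertElem K M v * y ∈ Submodule.span K (pathAt K M '' {i ∈ M.nonzeroPaths | i.1 = v}) := by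
  classical
  have hy : y ∈ Submodule.span K (pathAt K M '' M.nonzeroPaths) := by
    rw [span_pathAt_nonzeroPaths]
    trivial
  refine (Submodule.map_span_le (LinearMap.mulLeft K (vertElem K M v)) _ _).mpr ?_ ⟨y, hy, rfl⟩
  rintro _ ⟨i, hi, rfl⟩
  rw [LinearMap.mulLeft_apply, vertElem_mul_pathAt]
  split_ifs with h
  · exact Submodule.subset_span ⟨i, ⟨hi, h.symm⟩, rfl⟩
  · exact Submodule.zero_mem _

end PathBasis

section RegularRepresentation

open scoped Classical

variable (K : Type) [Field K] {V E : Type} (M : MonomialData V E)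

/-- Left multiplication by a vertex or an arrow on the basis vector `(w, l)`, read as `e_w l`. -/
noncomputable def genAction : V ⊕ E → V × List E → (V × List E →₀ K)
  | Sum.inl u, i => if u = i.1 then Finsupp.single i 1 else 0
  | Sum.inr e, i =>
    if M.tgt e = i.1 ∧ M.Nonzero (e :: i.2) then Finsupp.single (M.src e, e :: i.2) 1 else 0

noncomputable def freeRep : FreeAlgebra K (V ⊕ E) →ₐ[K] Module.End K (V × List E →₀ K) :=
  FreeAlgebra.lift K fun g => Finsupp.linearCombination K (genAction K M g)

theorem freeRep_ι_single (g : V ⊕ E) (i : V × List E) :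
    freeRep K M (FreeAlgebra.ι K g) (Finsupp.single i 1) = genAction K M g i := by
  simp [freeRep]

theorem freeRep_path_single (e : E) (m : List E) (i : V × List E) :
    freeRep K M ((e :: m).map fun e => FreeAlgebra.ι K (Sum.inr e)).prod (Finsupp.single i 1) =
      if M.tgt ((e :: m).getLast (List.cons_ne_nil e m)) = i.1 ∧ M.Nonzero (e :: (m ++ i.2))
      then Finsupp.single (M.src e, e :: (m ++ i.2)) 1 else 0 := by
  induction m generalizing e with
  | nil =>
    simp only [List.map_cons, List.map_nil, List.prod_singleton, freeRep_ι_single, genAction]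
    exact if_congr Iff.rfl rfl rfl
  | cons b m ih =>
    rw [List.map_cons, List.prod_cons, map_mul, Module.End.mul_apply, ih, List.getLast_cons_cons]
    by_cases hC : M.tgt ((b :: m).getLast (List.cons_ne_nil b m)) = i.1 ∧
        M.Nonzero (b :: (m ++ i.2))
    · rw [if_pos hC, freeRep_ι_single, genAction]
      refine if_congr ⟨fun h => ⟨hC.1, h.2⟩, fun h => ⟨?_, h.2⟩⟩ rfl rfl
      exact (List.isChain_cons_cons.mp h.2.1).1
    · rw [if_neg hC, map_zero, List.cons_append, if_neg]
      exact fun h => hC ⟨h.1, h.2.infix (List.suffix_cons e _).isInfix⟩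

variable [Fintype V]

theorem freeRep_rel ⦃x y : FreeAlgebra K (V ⊕ E)⦄ (h : PathAlgRel K M x y) :
    freeRep K M x = freeRep K M y := by
  refine Finsupp.lhom_ext' fun i => LinearMap.ext_ring ?_
  simp only [LinearMap.comp_apply, Finsupp.lsingle_apply]
  cases h with
  | vert_same v => by_cases h : v = i.1 <;> simp [freeRep_ι_single, genAction, h]
  | vert_ne v w hvw =>
    by_cases h : w = i.1
    · subst h
      simp [freeRep_ι_single, genAction, hvw]
    · simp [freeRep_ι_single, genAction, h]
  | sum_one => simp [freeRep_ι_single, genAction]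
  | src_mul e =>
    by_cases h : M.tgt e = i.1 ∧ M.Nonzero (e :: i.2) <;>
      simp [freeRep_ι_single, genAction, h]
  | mul_tgt e => by_cases h : M.tgt e = i.1 <;> simp [freeRep_ι_single, genAction, h]
  | rel f hf =>
    obtain ⟨e, m, rfl⟩ := List.exists_cons_of_ne_nil (List.ne_nil_of_length_pos
      (lt_of_lt_of_le two_pos (M.F_len f hf)))
    rw [freeRep_path_single, if_neg, map_zero, LinearMap.zero_apply]
    exact fun h => h.2.2 ⟨_, hf, (List.prefix_append (e :: m) i.2).isInfix⟩

noncomputable def regRep : PathAlg K M →ₐ[K] Module.End K (V × List E →₀ K) :=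
  RingQuot.liftAlgHom K ⟨freeRep K M, freeRep_rel K M⟩

/-- `x ↦ x · 1`, which reads off the coordinates of `x` in the basis of nonzero paths. -/
noncomputable def pathCoord : PathAlg K M →ₗ[K] (V × List E →₀ K) :=
  LinearMap.applyₗ (∑ v : V, Finsupp.single (v, []) 1) ∘ₗ (regRep K M).toLinearMap

theorem pathCoord_pathAt {i : V × List E} (hi : i ∈ M.nonzeroPaths) :
    pathCoord K M (pathAt K M i) = Finsupp.single i 1 := by
  obtain ⟨v, _ | ⟨e, m⟩⟩ := i
  · simp [pathCoord, pathAt_nil, regRep, vertElem, freeRep_ι_single, genAction,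
      Finset.sum_ite_eq]
  · obtain rfl : M.src e = v := hi.2 e rfl
    simp [pathCoord, pathAt_src_cons, regRep, pathElem_eq_mkAlgHom, -List.map_cons,
      freeRep_path_single, hi.1, Finset.sum_ite_eq]

theorem linearIndepOn_pathAt : LinearIndepOn K (pathAt K M) M.nonzeroPaths :=
  .of_comp (pathCoord K M) <| ((Finsupp.linearIndependent_single_one K _).linearIndepOn
    M.nonzeroPaths).congr fun _ hi => (pathCoord_pathAt K M hi).symm

end RegularRepresentation

namespace MonomialData.PerfectPair

variable (K : Type) [Field K] {V E : Type} [Fintype V] {M : MonomialData V E}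
  {p q : List E} {v : V}

theorem pathElem_mul_eq_zero (hpq : M.PerfectPair p q) :
    pathElem K M p * pathElem K M q = 0 := by
  obtain ⟨-, -, -, -, -, hz, -⟩ := hpq
  rw [← pathElem_append, pathElem_eq_zero_of_isZero K M hz]

theorem vertElem_mul_pathElem (hpq : M.PerfectPair p q)
    (hv : p.getLast?.map M.tgt = some v) : vertElem K M v * pathElem K M q = pathElem K M q := by
  obtain ⟨-, hq0, -, -, hcomp, -⟩ := hpq
  obtain ⟨a, ha, rfl⟩ := Option.map_eq_some_iff.mp hv
  exact pathAt_eq_pathElem K M hq0 fun e he => (hcomp a ha e he).symm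

end MonomialData.PerfectPair

section PerfectPair

variable (K : Type) [Field K] {V E : Type} [Fintype V] (M : MonomialData V E)
  {p q : List E} {v : V}

theorem span_pathAt_le_range_mulLeft (hpq : M.PerfectPair p q)
    (hv : p.getLast?.map M.tgt = some v) :
    Submodule.span K (pathAt K M '' {i ∈ M.nonzeroPaths | i.1 = v ∧ M.IsZero (p ++ i.2)}) ≤
      LinearMap.range (LinearMap.mulLeft K (pathElem K M q)) := by
  obtain ⟨-, -, hp, -, -, -, hq_dvd, -⟩ := hpq
  rw [Submodule.span_le]
  rintro _ ⟨⟨w, l⟩, ⟨hl, rfl, hz⟩, rfl⟩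
  have hl0 : l ≠ [] := by
    rintro rfl
    exact hp.2 (by simpa using hz)
  obtain ⟨r, rfl⟩ := hq_dvd l hl0 hl.1 (QuiverData.composable_of_tgt_eq_src hv hl.2) hz
  exact ⟨pathElem K M r, by rw [LinearMap.mulLeft_apply, ← pathElem_append,
    pathAt_eq_pathElem K M hl0 hl.2]⟩

theorem eq_zero_of_pathElem_mul_eq_zero (hp0 : p ≠ []) (hp : M.Nonzero p)
    (hv : p.getLast?.map M.tgt = some v) {x : PathAlg K M}
    (hx : x ∈ Submodule.span K
      (pathAt K M '' {i ∈ M.nonzeroPaths | i.1 = v ∧ ¬ M.IsZero (p ++ i.2)}))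
    (hpx : pathElem K M p * x = 0) : x = 0 := by
  obtain ⟨a, p', rfl⟩ := List.exists_cons_of_ne_nil hp0
  set D := {i ∈ M.nonzeroPaths | i.1 = v ∧ ¬ M.IsZero (a :: p' ++ i.2)}
  let shift : V × List E → V × List E := fun i => (M.src a, a :: (p' ++ i.2))
  have hshift : ∀ i ∈ D, pathElem K M (a :: p') * pathAt K M i = pathAt K M (shift i) := by
    rintro ⟨w, l⟩ ⟨-, rfl, -⟩
    rw [pathAt, ← mul_assoc, pathElem_mul_vertElem_of_getLast? K M hv, ← pathElem_append,
      pathAt_src_cons, List.cons_append]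
  have hmaps : shift '' D ⊆ M.nonzeroPaths := by
    rintro _ ⟨⟨w, l⟩, ⟨hl, rfl, hz⟩, rfl⟩
    refine ⟨⟨?_, by simpa using hz⟩, by simp [shift]⟩
    exact List.isChain_append.mpr
      ⟨hp.1, hl.1.1, QuiverData.composable_of_tgt_eq_src hv hl.2⟩
  have hinj : Set.InjOn shift D := by
    rintro ⟨w, l⟩ ⟨-, rfl, -⟩ ⟨w', l'⟩ ⟨-, rfl, -⟩ h
    simpa [shift] using h
  refine LinearIndepOn.eq_zero_of_map_eq_zero
    (f := LinearMap.mulLeft K (pathElem K M (a :: p'))) ?_ hx hpx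
  exact (((linearIndepOn_pathAt K M).mono hmaps).comp_of_image hinj).congr
    fun i hi => (hshift i hi).symm

theorem mem_range_mulLeft_of_pathElem_mul_eq_zero (hpq : M.PerfectPair p q)
    (hv : p.getLast?.map M.tgt = some v) {x : PathAlg K M}
    (hx : x ∈ Submodule.span K (pathAt K M '' {i ∈ M.nonzeroPaths | i.1 = v}))
    (hpx : pathElem K M p * x = 0) :
    x ∈ LinearMap.range (LinearMap.mulLeft K (pathElem K M q)) := by
  have hsplit : {i ∈ M.nonzeroPaths | i.1 = v} =
      {i ∈ M.nonzeroPaths | i.1 = v ∧ M.IsZero (p ++ i.2)} ∪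
        {i ∈ M.nonzeroPaths | i.1 = v ∧ ¬ M.IsZero (p ++ i.2)} := by
    ext i
    simp only [Set.mem_ofPred_eq, Set.mem_union]
    tauto
  rw [hsplit, Set.image_union, Submodule.span_union, Submodule.mem_sup] at hx
  obtain ⟨_, ⟨y, rfl⟩, x', hx', rfl⟩ := hx.imp fun _ h => h.imp_left
    (span_pathAt_le_range_mulLeft K M hpq hv ·)
  rw [LinearMap.mulLeft_apply, mul_add, ← mul_assoc, hpq.pathElem_mul_eq_zero K, zero_mul,
    zero_add] at hpx
  obtain ⟨hp0, -, hp, -⟩ := hpq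
  rw [eq_zero_of_pathElem_mul_eq_zero K M hp0 hp hv hx' hpx, add_zero]
  exact ⟨y, rfl⟩

end PerfectPair

/-- for a perfect pair `(p, q)` in the monomial algebra `Λ`,
the sequence `0 → qΛ → e_{t(p)}Λ → pΛ → 0` is a short exact sequence of right
`Λ`-modules, where the first map is the canonical inclusion and the second is
left multiplication by `p`.  (The inclusion is injective by definition;
exactness is expressed by: `qΛ ⊆ e_{t(p)}Λ`, left multiplication by `p` kills
`qΛ`, its kernel inside `e_{t(p)}Λ` is exactly `qΛ`, and it maps `e_{t(p)}Λ`
onto `pΛ`.) -/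
theorem perfectPair_short_exact (K : Type) [Field K] {V E : Type} [Fintype V]
    (M : MonomialData V E) (p q : List E) (hpq : M.PerfectPair p q)
    (v : V) (hv : p.getLast?.map M.toQuiverData.tgt = some v) :
    -- the inclusion `qΛ → e_{t(p)}Λ` is well defined and the composite with
    -- left multiplication by `p` vanishes
    (∀ x : PathAlg K M, (∃ y, x = pathElem K M q * y) →
      (∃ y, x = vertElem K M v * y) ∧ pathElem K M p * x = 0) ∧
    -- exactness in the middle: the kernel of left multiplication by `p` on
    -- `e_{t(p)}Λ` is exactly the image `qΛ` of the inclusion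
    (∀ x : PathAlg K M, (∃ y, x = vertElem K M v * y) →
      pathElem K M p * x = 0 → ∃ y, x = pathElem K M q * y) ∧
    -- left multiplication by `p` maps `e_{t(p)}Λ` onto `pΛ`
    (∀ z : PathAlg K M, (∃ y, z = pathElem K M p * y) →
      ∃ x, (∃ y, x = vertElem K M v * y) ∧ z = pathElem K M p * x) := by
  refine ⟨?_, ?_, ?_⟩
  · rintro _ ⟨y, rfl⟩
    exact ⟨⟨_, by rw [← mul_assoc, hpq.vertElem_mul_pathElem K hv]⟩,
      by rw [← mul_assoc, hpq.pathElem_mul_eq_zero K, zero_mul]⟩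
  · rintro _ ⟨y, rfl⟩ hpx
    obtain ⟨z, hz⟩ := mem_range_mulLeft_of_pathElem_mul_eq_zero K M hpq hv
      (vertElem_mul_mem_span_pathAt K M v y) hpx
    exact ⟨z, hz.symm⟩
  · rintro _ ⟨y, rfl⟩
    exact ⟨_, ⟨y, rfl⟩, by rw [← mul_assoc, pathElem_mul_vertElem_of_getLast? K M hv]⟩
end

section
/- Let Λ = KQ/I be a monomial algebra and let (p, q) be a perfect pair in Λ. Then the path pq belongs to the set 𝔽 of minimal paths lying in the ideal I (i.e., pq ∈ I but no proper subpath of pq lies in I). -/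
/-- for a perfect pair `(p, q)` in a monomial algebra, the path
`pq` belongs to the set `𝔽` of minimal paths lying in `I`. -/
theorem perfectPair_mem_F {V E : Type} (M : MonomialData V E) (p q : List E)
    (h : M.PerfectPair p q) : (p ++ q) ∈ M.F := by
  obtain ⟨hp, hq, ⟨hpP, hpNZ⟩, ⟨hqP, hqNZ⟩, hcomp, hz, h7, h8⟩ := h
  obtain ⟨f, hfF, u, v, hfv⟩ := hz
  -- u ++ (f ++ v) = p ++ q
  have heq : u ++ (f ++ v) = p ++ q := by simpa [List.append_assoc] using hfv
  rcases (List.append_eq_append_iff.mp heq) with ⟨a, ha, hfa⟩ | ⟨c, hc, hqc⟩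
  · -- p = u ++ a, f ++ v = a ++ q
    rcases (List.append_eq_append_iff.mp hfa) with ⟨b, hb, hvb⟩ | ⟨c, hfc, hqc⟩
    · -- a = f ++ b : f infix of p, contradiction
      exact absurd ⟨f, hfF, u, b, by rw [ha, hb]; simp [List.append_assoc]⟩ hpNZ
    · -- f = a ++ c, q = c ++ v
      have hane : a ≠ [] := by
        rintro rfl
        exact hqNZ ⟨f, hfF, [], v, by simp [hfc, ← hqc]⟩
      have hcne : c ≠ [] := by
        rintro rfl
        exact hpNZ ⟨f, hfF, u, [], by rw [ha, hfc]; simp⟩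
      have hasuf : a <:+ p := ⟨u, ha.symm⟩
      have hcpre : c <+: q := ⟨v, hqc.symm⟩
      have hcNZ : M.Nonzero c := by
        refine ⟨hqP.infix hcpre.isInfix, ?_⟩
        rintro ⟨g, hgF, hg⟩
        exact hqNZ ⟨g, hgF, hg.trans hcpre.isInfix⟩
      have haNZ : M.Nonzero a := by
        refine ⟨hpP.infix hasuf.isInfix, ?_⟩
        rintro ⟨g, hgF, hg⟩
        exact hpNZ ⟨g, hgF, hg.trans hasuf.isInfix⟩
      have hheadc : c.head? = q.head? := by
        rw [hqc, List.head?_append, List.head?_eq_head hcne]; rfl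
      have hlasta : a.getLast? = p.getLast? := by
        rw [ha]; exact (List.getLast?_append_of_ne_nil u hane).symm
      have hcompc : M.toQuiverData.Composable p c := by
        intro x hx y hy
        exact hcomp x hx y (hheadc ▸ hy)
      have hcompa : M.toQuiverData.Composable a q := by
        intro x hx y hy
        exact hcomp x (hlasta ▸ hx) y hy
      have hzc : M.IsZero (p ++ c) :=
        ⟨f, hfF, u, [], by rw [ha, hfc]; simp [List.append_assoc]⟩
      have hza : M.IsZero (a ++ q) :=
        ⟨f, hfF, [], v, by rw [hqc, hfc]; simp [List.append_assoc]⟩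
      have hq_c : q <+: c := h7 c hcne hcNZ hcompc hzc
      have hp_a : p <:+ a := h8 a hane haNZ hcompa hza
      have hqc' : c = q := hcpre.eq_of_length
        (Nat.le_antisymm hcpre.length_le hq_c.length_le)
      have hpa' : a = p := hasuf.eq_of_length
        (Nat.le_antisymm hasuf.length_le hp_a.length_le)
      rw [← hpa', ← hqc', ← hfc]
      exact hfF
  · -- u = p ++ c, q = c ++ (f ++ v) : f infix of q, contradiction
    exact absurd ⟨f, hfF, c, v, by rw [hqc]; simp [List.append_assoc]⟩ hqNZ
end

section
/- Let (p_n, p) and (p, p_2) be perfect pairs in a monomial algebra Λ. Then the following are equivalent: (a) p is elementary; (b) p_2 is co-elementary; (c) p_n is co-elementary. -/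
namespace CSZAux

open List

variable {V E : Type} {M : MonomialData V E}

/-! ### Basic list lemmas -/

lemma head?_eq_of_prefix {α : Type*} {l m : List α} (h : l <+: m) (hl : l ≠ []) :
    m.head? = l.head? := by
  obtain ⟨t, rfl⟩ := h
  exact List.head?_append_of_ne_nil l hl

lemma getLast?_eq_of_suffix {α : Type*} {l m : List α} (h : l <:+ m) (hl : l ≠ []) :
    m.getLast? = l.getLast? := by
  obtain ⟨t, rfl⟩ := h
  exact List.getLast?_append_of_ne_nil t hl

/-! ### Basic lemmas on zero/nonzero paths -/

lemma isZero_of_infix {l m : List E} (h : M.IsZero l) (hlm : l <:+: m) : M.IsZero m := by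
  obtain ⟨f, hf, hfl⟩ := h
  exact ⟨f, hf, hfl.trans hlm⟩

lemma isPath_infix {l m : List E} (h : M.toQuiverData.IsPath m) (hlm : l <:+: m) :
    M.toQuiverData.IsPath l := by
  obtain ⟨s, t, rfl⟩ := hlm
  unfold QuiverData.IsPath at *
  rw [List.append_assoc] at h
  exact (List.isChain_append.mp (List.isChain_append.mp h).2.1).1

lemma nonzero_of_infix {l m : List E} (h : M.Nonzero m) (hlm : l <:+: m) : M.Nonzero l :=
  ⟨isPath_infix h.1 hlm, fun hz => h.2 (isZero_of_infix hz hlm)⟩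

lemma comp_congr {x x' y y' : List E} (hx : x.getLast? = x'.getLast?)
    (hy : y.head? = y'.head?) (h : M.toQuiverData.Composable x y) :
    M.toQuiverData.Composable x' y' := by
  intro a ha b hb
  exact h a (by rw [hx]; exact ha) b (by rw [hy]; exact hb)

lemma isPath_append {x y : List E} (hx : M.toQuiverData.IsPath x) (hy : M.toQuiverData.IsPath y)
    (h : M.toQuiverData.Composable x y) : M.toQuiverData.IsPath (x ++ y) :=
  List.isChain_append.mpr ⟨hx, hy, h⟩

lemma comp_of_path_append {x y : List E} (h : M.toQuiverData.IsPath (x ++ y)) :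
    M.toQuiverData.Composable x y :=
  (List.isChain_append.mp h).2.2

/-! ### Perfect pair accessors -/

lemma pp_p_ne {p q : List E} (h : M.PerfectPair p q) : p ≠ [] := h.1
lemma pp_q_ne {p q : List E} (h : M.PerfectPair p q) : q ≠ [] := h.2.1
lemma pp_np {p q : List E} (h : M.PerfectPair p q) : M.Nonzero p := h.2.2.1
lemma pp_nq {p q : List E} (h : M.PerfectPair p q) : M.Nonzero q := h.2.2.2.1
lemma pp_comp {p q : List E} (h : M.PerfectPair p q) : M.toQuiverData.Composable p q :=
  h.2.2.2.2.1
lemma pp_zero {p q : List E} (h : M.PerfectPair p q) : M.IsZero (p ++ q) := h.2.2.2.2.2.1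
lemma pp_qmin {p q : List E} (h : M.PerfectPair p q) :
    ∀ q', q' ≠ [] → M.Nonzero q' → M.toQuiverData.Composable p q' →
      M.IsZero (p ++ q') → q <+: q' := h.2.2.2.2.2.2.1
lemma pp_pmin {p q : List E} (h : M.PerfectPair p q) :
    ∀ p', p' ≠ [] → M.Nonzero p' → M.toQuiverData.Composable p' q →
      M.IsZero (p' ++ q) → p <:+ p' := h.2.2.2.2.2.2.2

lemma succ_unique {p q q' : List E} (h : M.PerfectPair p q) (h' : M.PerfectPair p q') :
    q = q' := by
  have ha := pp_qmin h q' (pp_q_ne h') (pp_nq h') (pp_comp h') (pp_zero h')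
  have hb := pp_qmin h' q (pp_q_ne h) (pp_nq h) (pp_comp h) (pp_zero h)
  exact ha.eq_of_length (le_antisymm ha.length_le hb.length_le)

/-! ### The one-step lemmas -/

/-- Lemma S: if `(p, p₂)` and `(p ++ r, q₂)` are perfect pairs with `r ≠ []`,
then `p₂ = r ++ q₂`. -/
lemma lemS {p p2 r q2 : List E} (h1 : M.PerfectPair p p2) (h2 : M.PerfectPair (p ++ r) q2)
    (hr : r ≠ []) : p2 = r ++ q2 := by
  have hq : M.Nonzero (p ++ r) := pp_np h2
  have hrsuf : r <:+ p ++ r := List.suffix_append p r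
  have hcr : M.toQuiverData.Composable r q2 :=
    comp_congr (List.getLast?_append_of_ne_nil p hr) rfl (pp_comp h2)
  have hnz : ¬ M.IsZero (r ++ q2) := by
    intro hz
    have hsuf := pp_pmin h2 r hr (nonzero_of_infix hq hrsuf.isInfix) hcr hz
    have hlen := hsuf.length_le
    rw [List.length_append] at hlen
    have hp0 : p.length = 0 := by omega
    exact pp_p_ne h1 (List.eq_nil_of_length_eq_zero hp0)
  have hcpr : M.toQuiverData.Composable p r := comp_of_path_append hq.1
  have hpath : M.toQuiverData.IsPath (r ++ q2) :=
    isPath_append (isPath_infix hq.1 hrsuf.isInfix) (pp_nq h2).1 hcr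
  have hcp : M.toQuiverData.Composable p (r ++ q2) :=
    comp_congr rfl (List.head?_append_of_ne_nil r hr).symm hcpr
  have hzero : M.IsZero (p ++ (r ++ q2)) := by
    rw [← List.append_assoc]; exact pp_zero h2
  have hpre : p2 <+: r ++ q2 :=
    pp_qmin h1 (r ++ q2) (by simp [hr]) ⟨hpath, hnz⟩ hcp hzero
  rcases List.prefix_or_prefix_of_prefix hpre (List.prefix_append r q2) with hc | hc
  · exfalso
    apply hq.2
    obtain ⟨t, ht⟩ := hc
    refine isZero_of_infix (pp_zero h1) ⟨[], t, ?_⟩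
    simp [List.append_assoc, ht]
  · obtain ⟨t, ht⟩ := hc
    have htne : t ≠ [] := by
      rintro rfl
      rw [List.append_nil] at ht
      exact hq.2 (by rw [ht]; exact pp_zero h1)
    have htq2 : t <+: q2 := by
      obtain ⟨u, hu⟩ := hpre
      refine ⟨u, List.append_cancel_left (as := r) ?_⟩
      rw [← List.append_assoc, ht, hu]
    have htnz : M.Nonzero t := nonzero_of_infix (pp_nq h2) htq2.isInfix
    have hct : M.toQuiverData.Composable (p ++ r) t :=
      comp_congr rfl (head?_eq_of_prefix htq2 htne) (pp_comp h2)
    have hzt : M.IsZero ((p ++ r) ++ t) := by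
      rw [List.append_assoc, ht]; exact pp_zero h1
    have hq2t := pp_qmin h2 t htne htnz hct hzt
    have ht2 : t = q2 := (hq2t.eq_of_length (le_antisymm hq2t.length_le htq2.length_le)).symm
    rw [← ht, ht2]

/-- Lemma D': if `(p, p₂)` and `(y ++ p, q₂)` are perfect pairs with `y ≠ []`,
then `q₂` is a proper prefix of `p₂`. -/
lemma lemD' {p p2 y q2 : List E} (h1 : M.PerfectPair p p2) (h2 : M.PerfectPair (y ++ p) q2)
    (hy : y ≠ []) : q2 <+: p2 ∧ q2 ≠ p2 := by
  have hcomp : M.toQuiverData.Composable (y ++ p) p2 :=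
    comp_congr (List.getLast?_append_of_ne_nil y (pp_p_ne h1)).symm rfl (pp_comp h1)
  have hzero : M.IsZero ((y ++ p) ++ p2) := by
    rw [List.append_assoc]
    exact isZero_of_infix (pp_zero h1) ⟨y, [], by simp⟩
  have hpre : q2 <+: p2 := pp_qmin h2 p2 (pp_q_ne h1) (pp_nq h1) hcomp hzero
  refine ⟨hpre, ?_⟩
  rintro rfl
  have hsuf := pp_pmin h2 p (pp_p_ne h1) (pp_np h1) (pp_comp h1) (pp_zero h1)
  have hlen := hsuf.length_le
  rw [List.length_append] at hlen
  exact hy (List.eq_nil_of_length_eq_zero (by omega))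

/-- Lemma D: if `(p, p₂)` and `(un, u)` are perfect pairs and `u` is a proper
prefix of `p₂`, then `p` is a proper suffix of `un`. -/
lemma lemD {p p2 un u : List E} (h1 : M.PerfectPair p p2) (h2 : M.PerfectPair un u)
    (hu : u <+: p2) (hne : u ≠ p2) : ∃ y, y ≠ [] ∧ un = y ++ p := by
  obtain ⟨z, hz⟩ := hu
  have hzero : M.IsZero (un ++ p2) := by
    rw [← hz, ← List.append_assoc]
    exact isZero_of_infix (pp_zero h2) ⟨[], z, by simp⟩
  have hcomp : M.toQuiverData.Composable un p2 := by
    refine comp_congr rfl ?_ (pp_comp h2)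
    rw [← hz]
    exact (List.head?_append_of_ne_nil u (pp_q_ne h2)).symm
  have hsuf : p <:+ un := pp_pmin h1 un (pp_p_ne h2) (pp_np h2) hcomp hzero
  obtain ⟨y, hy⟩ := hsuf
  refine ⟨y, ?_, hy.symm⟩
  rintro rfl
  rw [List.nil_append] at hy
  exact hne (succ_unique (show M.PerfectPair p u by rw [hy]; exact h2) h1)

/-- Lemma L5: if `(X, w ++ y)` and `(Y, y)` are perfect pairs with `w ≠ []`,
then `Y = X ++ w`. -/
lemma lemL5 {X w y Y : List E} (h1 : M.PerfectPair X (w ++ y)) (h2 : M.PerfectPair Y y)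
    (hw : w ≠ []) : Y = X ++ w := by
  have hy : y ≠ [] := pp_q_ne h2
  have hwpre : w <+: w ++ y := List.prefix_append w y
  have hcXw : M.toQuiverData.Composable X w :=
    comp_congr rfl (List.head?_append_of_ne_nil w hw) (pp_comp h1)
  have hXw_nz : ¬ M.IsZero (X ++ w) := by
    intro hzz
    have := pp_qmin h1 w hw (nonzero_of_infix (pp_nq h1) hwpre.isInfix) hcXw hzz
    have hlen := this.length_le
    rw [List.length_append] at hlen
    exact hy (List.eq_nil_of_length_eq_zero (by omega))
  have hpathXw : M.toQuiverData.IsPath (X ++ w) :=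
    isPath_append (pp_np h1).1 (isPath_infix (pp_nq h1).1 hwpre.isInfix) hcXw
  have hcomp : M.toQuiverData.Composable (X ++ w) y := by
    refine comp_congr ?_ rfl (comp_of_path_append (pp_nq h1).1)
    exact (List.getLast?_append_of_ne_nil X hw).symm
  have hzero : M.IsZero ((X ++ w) ++ y) := by
    rw [List.append_assoc]; exact pp_zero h1
  have hsuf : Y <:+ X ++ w :=
    pp_pmin h2 (X ++ w) (by simp [pp_p_ne h1]) ⟨hpathXw, hXw_nz⟩ hcomp hzero
  rcases List.suffix_or_suffix_of_suffix hsuf (List.suffix_append X w) with hc | hc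
  · exfalso
    apply (pp_nq h1).2
    obtain ⟨t, ht⟩ := hc
    refine isZero_of_infix (pp_zero h2) ⟨t, [], ?_⟩
    simp [← List.append_assoc, ht]
  · obtain ⟨t, ht⟩ := hc
    have htX : t <:+ X := by
      obtain ⟨u, hu⟩ := hsuf
      refine ⟨u, List.append_cancel_right (bs := w) ?_⟩
      rw [List.append_assoc, ht, hu]
    have htne : t ≠ [] := by
      rintro rfl
      rw [List.nil_append] at ht
      apply (pp_nq h1).2
      have : M.IsZero (Y ++ y) := pp_zero h2
      rwa [← ht] at this
    have htnz : M.Nonzero t := nonzero_of_infix (pp_np h2) ⟨[], w, by simp [ht]⟩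
    have hct : M.toQuiverData.Composable t (w ++ y) := by
      refine comp_congr rfl (List.head?_append_of_ne_nil w hw).symm ?_
      exact comp_of_path_append (by rw [ht]; exact (pp_np h2).1)
    have hzt : M.IsZero (t ++ (w ++ y)) := by
      rw [← List.append_assoc, ht]; exact pp_zero h2
    have hXt := pp_pmin h1 t htne htnz hct hzt
    have : t = X := hXt.eq_of_length (le_antisymm hXt.length_le htX.length_le) |>.symm
    rw [← ht, this]

/-! ### Pair construction lemmas -/

/-- If `(a, a₂)` and `(b, b₁)` are perfect pairs with `a₂ = b ++ w`, `w ≠ []`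
and `w <+: b₁`, then `(a ++ b, w)` is a perfect pair. -/
lemma pairA {a b w a2 b1 : List E} (h1 : M.PerfectPair a a2) (h2 : M.PerfectPair b b1)
    (ha2 : a2 = b ++ w) (hw : w ≠ []) (hwb1 : w <+: b1) :
    M.PerfectPair (a ++ b) w := by
  have hb_ne : b ≠ [] := pp_p_ne h2
  have ha_ne : a ≠ [] := pp_p_ne h1
  have hhead : a2.head? = b.head? := by
    rw [ha2]; exact List.head?_append_of_ne_nil b hb_ne
  have hcab : M.toQuiverData.Composable a b := comp_congr rfl hhead (pp_comp h1)
  have hpath_ab : M.toQuiverData.IsPath (a ++ b) :=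
    isPath_append (pp_np h1).1 (pp_np h2).1 hcab
  have hnz_ab : M.Nonzero (a ++ b) := by
    refine ⟨hpath_ab, fun hz => ?_⟩
    have hpre := pp_qmin h1 b hb_ne (pp_np h2) hcab hz
    rw [ha2] at hpre
    have hlen := hpre.length_le
    rw [List.length_append] at hlen
    exact hw (List.eq_nil_of_length_eq_zero (by omega))
  have hnz_w : M.Nonzero w :=
    nonzero_of_infix (pp_nq h1) (by rw [ha2]; exact (List.suffix_append b w).isInfix)
  have hcomp : M.toQuiverData.Composable (a ++ b) w := by
    refine comp_congr (List.getLast?_append_of_ne_nil a hb_ne).symm rfl ?_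
    exact comp_of_path_append (by rw [← ha2]; exact (pp_nq h1).1)
  have hz : M.IsZero ((a ++ b) ++ w) := by
    rw [List.append_assoc, ← ha2]; exact pp_zero h1
  refine ⟨by simp [ha_ne], hw, hnz_ab, hnz_w, hcomp, hz, ?_, ?_⟩
  · intro q' hq'ne hq'nz hq'comp hq'z
    rw [List.append_assoc] at hq'z
    have hcbq' : M.toQuiverData.Composable b q' :=
      comp_congr (List.getLast?_append_of_ne_nil a hb_ne) rfl hq'comp
    by_cases hzb : M.IsZero (b ++ q')
    · exact hwb1.trans (pp_qmin h2 q' hq'ne hq'nz hcbq' hzb)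
    · have hnzb : M.Nonzero (b ++ q') :=
        ⟨isPath_append (pp_np h2).1 hq'nz.1 hcbq', hzb⟩
      have hhead2 : a2.head? = (b ++ q').head? := by
        rw [ha2, List.head?_append_of_ne_nil b hb_ne, List.head?_append_of_ne_nil b hb_ne]
      have hpre := pp_qmin h1 (b ++ q') (by simp [hb_ne]) hnzb
        (comp_congr rfl hhead2 (pp_comp h1)) hq'z
      rw [ha2] at hpre
      obtain ⟨t, ht⟩ := hpre
      refine ⟨t, List.append_cancel_left (as := b) ?_⟩
      rw [← List.append_assoc, ht]
  · intro p' hp'ne hp'nz hp'comp hp'z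
    obtain ⟨tb, htb⟩ := hwb1
    have hz1 : M.IsZero (p' ++ b1) := by
      rw [← htb, ← List.append_assoc]
      exact isZero_of_infix hp'z ⟨[], tb, by simp⟩
    have hcomp1 : M.toQuiverData.Composable p' b1 := by
      refine comp_congr rfl ?_ hp'comp
      rw [← htb]
      exact (List.head?_append_of_ne_nil w hw).symm
    obtain ⟨z, hzp⟩ := pp_pmin h2 p' hp'ne hp'nz hcomp1 hz1
    have hz_ne : z ≠ [] := by
      rintro rfl
      rw [List.nil_append] at hzp
      apply (pp_nq h1).2
      rw [ha2, hzp]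
      exact hp'z
    have hz_nz : M.Nonzero z := nonzero_of_infix hp'nz ⟨[], b, by simp [hzp]⟩
    have hcz : M.toQuiverData.Composable z a2 := by
      refine comp_congr rfl ?_ (comp_of_path_append (by rw [hzp]; exact hp'nz.1))
      rw [ha2]
      exact (List.head?_append_of_ne_nil b hb_ne).symm
    have hzz : M.IsZero (z ++ a2) := by
      rw [ha2, ← List.append_assoc, hzp]; exact hp'z
    obtain ⟨y, hy⟩ := pp_pmin h1 z hz_ne hz_nz hcz hzz
    exact ⟨y, by rw [← hzp, ← hy, List.append_assoc]⟩

/-- If `(X, a')` and `(b₁, b')` are perfect pairs with `w <:+ X`, `w ≠ []`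
and `b₁ = w ++ a'`, then `(w, a' ++ b')` is a perfect pair. -/
lemma pairB {w a' b' X b1 : List E} (hXa : M.PerfectPair X a') (hb : M.PerfectPair b1 b')
    (hX : w <:+ X) (hw : w ≠ []) (hb1 : b1 = w ++ a') :
    M.PerfectPair w (a' ++ b') := by
  have ha'_ne : a' ≠ [] := pp_q_ne hXa
  have hb'_ne : b' ≠ [] := pp_q_ne hb
  have hnz_w : M.Nonzero w :=
    nonzero_of_infix (pp_np hb) (by rw [hb1]; exact (List.prefix_append w a').isInfix)
  have hlast : b1.getLast? = a'.getLast? := by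
    rw [hb1]; exact List.getLast?_append_of_ne_nil w ha'_ne
  have hca'b' : M.toQuiverData.Composable a' b' := comp_congr hlast rfl (pp_comp hb)
  have hnz_ab : M.Nonzero (a' ++ b') := by
    refine ⟨isPath_append (pp_nq hXa).1 (pp_nq hb).1 hca'b', fun hz => ?_⟩
    have hsuf := pp_pmin hb a' ha'_ne (pp_nq hXa) hca'b' hz
    have hlen := hsuf.length_le
    rw [hb1, List.length_append] at hlen
    exact hw (List.eq_nil_of_length_eq_zero (by omega))
  have hcomp : M.toQuiverData.Composable w (a' ++ b') := by
    refine comp_congr rfl (List.head?_append_of_ne_nil a' ha'_ne).symm ?_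
    exact comp_of_path_append (by rw [← hb1]; exact (pp_np hb).1)
  have hz : M.IsZero (w ++ (a' ++ b')) := by
    rw [← List.append_assoc, ← hb1]; exact pp_zero hb
  refine ⟨hw, by simp [ha'_ne], hnz_w, hnz_ab, hcomp, hz, ?_, ?_⟩
  · intro q' hq'ne hq'nz hq'comp hq'z
    obtain ⟨Y, hY⟩ := id hX
    have hzX : M.IsZero (X ++ q') := by
      rw [← hY, List.append_assoc]
      exact isZero_of_infix hq'z ⟨Y, [], by simp⟩
    have hcXq' : M.toQuiverData.Composable X q' :=
      comp_congr (getLast?_eq_of_suffix hX hw).symm rfl hq'comp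
    obtain ⟨z, hzq⟩ := pp_qmin hXa q' hq'ne hq'nz hcXq' hzX
    have hz_ne : z ≠ [] := by
      rintro rfl
      rw [List.append_nil] at hzq
      apply (pp_np hb).2
      rw [hb1, hzq]
      exact hq'z
    have hz_nz : M.Nonzero z := nonzero_of_infix hq'nz ⟨a', [], by simp [hzq]⟩
    have hcz : M.toQuiverData.Composable b1 z := by
      refine comp_congr hlast.symm rfl ?_
      exact comp_of_path_append (by rw [hzq]; exact hq'nz.1)
    have hzz : M.IsZero (b1 ++ z) := by
      rw [hb1, List.append_assoc, hzq]
      exact hq'z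
    obtain ⟨u, hu⟩ := pp_qmin hb z hz_ne hz_nz hcz hzz
    exact ⟨u, by rw [List.append_assoc, hu, hzq]⟩
  · intro p' hp'ne hp'nz hp'comp hp'z
    have hcpa' : M.toQuiverData.Composable p' a' :=
      comp_congr rfl (List.head?_append_of_ne_nil a' ha'_ne) hp'comp
    by_cases hza' : M.IsZero (p' ++ a')
    · exact hX.trans (pp_pmin hXa p' hp'ne hp'nz hcpa' hza')
    · have hnz : M.Nonzero (p' ++ a') :=
        ⟨isPath_append hp'nz.1 (pp_nq hXa).1 hcpa', hza'⟩
      have hlast2 : b1.getLast? = (p' ++ a').getLast? := by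
        rw [hb1, List.getLast?_append_of_ne_nil w ha'_ne,
          List.getLast?_append_of_ne_nil p' ha'_ne]
      have hzpa : M.IsZero ((p' ++ a') ++ b') := by
        rw [List.append_assoc]; exact hp'z
      obtain ⟨u, hu⟩ := pp_pmin hb (p' ++ a') (by simp [hp'ne]) hnz
        (comp_congr hlast2 rfl (pp_comp hb)) hzpa
      rw [hb1, ← List.append_assoc] at hu
      exact ⟨u, List.append_cancel_right (bs := a') hu⟩

/-! ### Orbit machinery -/

lemma periodic_add_mul {α : Type*} {s : ℕ → α} {n : ℕ} (hper : ∀ i, s (i + n) = s i) :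
    ∀ k i, s (i + k * n) = s i := by
  intro k
  induction k with
  | zero => simp
  | succ k ih =>
    intro i
    rw [Nat.succ_mul, ← Nat.add_assoc, hper, ih]

lemma isPerfect_shift {s : ℕ → List E} {n : ℕ} (hn : 0 < n) (hper : ∀ i, s (i + n) = s i)
    (hpp : ∀ i, M.PerfectPair (s i) (s (i + 1))) (i : ℕ) : M.IsPerfect (s i) := by
  refine ⟨n, fun j => s (i + j), hn, by simp, fun j => ?_, fun j => ?_⟩
  · show s (i + (j + n)) = s (i + j)
    rw [← Nat.add_assoc, hper]
  · show M.PerfectPair (s (i + j)) (s (i + (j + 1)))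
    rw [← Nat.add_assoc]
    exact hpp (i + j)

lemma perfect_ne_nil {p : List E} (h : M.IsPerfect p) : p ≠ [] := by
  obtain ⟨n, s, hn, h0, hper, hpp⟩ := h
  rw [← h0]
  exact pp_p_ne (hpp 0)

/-- Concatenation theorem: if `a` and `b` are perfect path sequences and
`b 0` is a proper prefix of `a 1`, then `a 0 ++ b 0` is perfect. -/
lemma concat {a b : ℕ → List E} {n m : ℕ} (hn : 0 < n) (hm : 0 < m)
    (hpa : ∀ i, a (i + n) = a i) (hpb : ∀ i, b (i + m) = b i)
    (hppa : ∀ i, M.PerfectPair (a i) (a (i + 1)))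
    (hppb : ∀ i, M.PerfectPair (b i) (b (i + 1)))
    {w0 : List E} (hw0 : w0 ≠ []) (h01 : a 1 = b 0 ++ w0) :
    M.IsPerfect (a 0 ++ b 0) := by
  have inv : ∀ k, ∃ w, w ≠ [] ∧ a (2*k+1) = b (2*k) ++ w ∧ b (2*k+1) = w ++ a (2*k+2) := by
    intro k
    induction k with
    | zero =>
      refine ⟨w0, hw0, by simpa using h01, ?_⟩
      have hS := lemS (hppb 0) (show M.PerfectPair (b 0 ++ w0) (a 2)
        by rw [← h01]; exact hppa 1) hw0
      simpa using hS
    | succ k ih =>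
      obtain ⟨w, hwne, hA, hB⟩ := ih
      have hd := lemD' (hppa (2*k+2)) (show M.PerfectPair (w ++ a (2*k+2)) (b (2*k+2))
        by rw [← hB]; exact hppb (2*k+1)) hwne
      obtain ⟨⟨w', hw'⟩, hne⟩ := hd
      have hw'ne : w' ≠ [] := by
        rintro rfl
        rw [List.append_nil] at hw'
        exact hne hw'
      have e1 : 2*(k+1)+1 = 2*k+2+1 := by omega
      have e2 : 2*(k+1) = 2*k+2 := by omega
      have e3 : 2*(k+1)+2 = 2*k+2+2 := by omega
      refine ⟨w', hw'ne, by rw [e1, e2, hw'], ?_⟩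
      have hS := lemS (hppb (2*k+2)) (show M.PerfectPair (b (2*k+2) ++ w') (a (2*k+2+2))
        by rw [hw']; exact hppa (2*k+2+1)) hw'ne
      first
      | exact hS
      | (rw [e1, e3]; exact hS)
      | simpa only [e1, e3] using hS
  classical
  refine ⟨2 * (n * m),
    fun i => if i % 2 = 0 then a i ++ b i else (a i).drop ((b (i-1)).length),
    by positivity, by simp, ?_, ?_⟩
  · intro i
    have hpar : (i + 2*(n*m)) % 2 = i % 2 := by omega
    have hA : a (i + 2*(n*m)) = a i := by
      rw [show i + 2*(n*m) = i + (2*m)*n by ring, periodic_add_mul hpa]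
    have hB : ∀ j, b (j + 2*(n*m)) = b j := by
      intro j
      rw [show j + 2*(n*m) = j + (2*n)*m by ring, periodic_add_mul hpb]
    by_cases h2 : i % 2 = 0
    · simp only [hpar, h2, if_pos, hA, hB i]
    · simp only [hpar, h2, if_neg, ite_false]
      have hi1 : 1 ≤ i := by omega
      rw [hA, show i + 2*(n*m) - 1 = (i - 1) + 2*(n*m) by omega, hB (i-1)]
  · intro i
    rcases Nat.even_or_odd i with ⟨k, hk⟩ | ⟨k, hk⟩
    · -- i = 2k
      have hi : i = 2*k := by omega
      subst hi
      obtain ⟨w, hwne, hA, hB⟩ := inv k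
      have m0 : (2*k) % 2 = 0 := by omega
      have m1 : (2*k+1) % 2 = 1 := by omega
      simp only [m0, m1, if_pos, if_neg, reduceCtorEq, Nat.add_sub_cancel,
        Nat.one_ne_zero, ite_false, ite_true]
      rw [hA, List.drop_left]
      exact pairA (hppa (2*k)) (hppb (2*k)) hA hwne ⟨a (2*k+2), hB.symm⟩
    · -- i = 2k+1
      have hi : i = 2*k+1 := by omega
      subst hi
      obtain ⟨w, hwne, hA, hB⟩ := inv k
      have m1 : (2*k+1) % 2 = 1 := by omega
      have m0 : (2*k+1+1) % 2 = 0 := by omega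
      simp only [m0, m1, if_pos, if_neg, Nat.add_sub_cancel, Nat.one_ne_zero,
        ite_false, ite_true]
      rw [hA, List.drop_left]
      exact pairB (hppa (2*k+1)) (hppb (2*k+1)) ⟨b (2*k), hA.symm⟩ hwne hB

/-- Splitting theorem: if `a` and `c` are perfect path sequences and
`c 0 = a 0 ++ b0` with `b0 ≠ []`, then `b0` is perfect. -/
lemma split {a c : ℕ → List E} {n m : ℕ} (hn : 0 < n) (hm : 0 < m)
    (hpa : ∀ i, a (i + n) = a i) (hpc : ∀ i, c (i + m) = c i)
    (hppa : ∀ i, M.PerfectPair (a i) (a (i + 1)))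
    (hppc : ∀ i, M.PerfectPair (c i) (c (i + 1)))
    {b0 : List E} (hb0 : b0 ≠ []) (h0 : c 0 = a 0 ++ b0) :
    M.IsPerfect b0 := by
  have inv : ∀ k, ∃ b, b ≠ [] ∧ c (2*k) = a (2*k) ++ b ∧ a (2*k+1) = b ++ c (2*k+1) := by
    intro k
    induction k with
    | zero =>
      refine ⟨b0, hb0, by simpa using h0, ?_⟩
      have hS := lemS (hppa 0) (show M.PerfectPair (a 0 ++ b0) (c 1)
        by rw [← h0]; exact hppc 0) hb0
      simpa using hS
    | succ k ih =>
      obtain ⟨b, hbne, hC, hA⟩ := ih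
      have hd := lemD' (hppc (2*k+1)) (show M.PerfectPair (b ++ c (2*k+1)) (a (2*k+2))
        by rw [← hA]; exact hppa (2*k+1)) hbne
      obtain ⟨⟨b', hb'⟩, hne⟩ := hd
      have hb'ne : b' ≠ [] := by
        rintro rfl
        rw [List.append_nil] at hb'
        exact hne hb'
      have e1 : 2*(k+1) = 2*k+2 := by omega
      have e2 : 2*(k+1)+1 = 2*k+2+1 := by omega
      refine ⟨b', hb'ne, by rw [e1, hb'], ?_⟩
      have hS := lemS (hppa (2*k+2)) (show M.PerfectPair (a (2*k+2) ++ b') (c (2*k+2+1))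
        by rw [hb']; exact hppc (2*k+2)) hb'ne
      first
      | exact hS
      | (rw [e1, e2]; exact hS)
      | simpa only [e1, e2] using hS
  classical
  refine ⟨2 * (n * m),
    fun i => if i % 2 = 0 then (c i).drop ((a i).length) else c i ++ a (i+1),
    by positivity, by simp [h0], ?_, ?_⟩
  · intro i
    have hpar : (i + 2*(n*m)) % 2 = i % 2 := by omega
    have hA : ∀ j, a (j + 2*(n*m)) = a j := by
      intro j
      rw [show j + 2*(n*m) = j + (2*m)*n by ring, periodic_add_mul hpa]
    have hC : c (i + 2*(n*m)) = c i := by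
      rw [show i + 2*(n*m) = i + (2*n)*m by ring, periodic_add_mul hpc]
    by_cases h2 : i % 2 = 0
    · simp only [hpar, h2, if_pos, hA i, hC, ite_true]
    · simp only [hpar, h2, if_neg, ite_false]
      rw [hC, show i + 2*(n*m) + 1 = (i + 1) + 2*(n*m) by omega, hA (i+1)]
  · intro i
    rcases Nat.even_or_odd i with ⟨k, hk⟩ | ⟨k, hk⟩
    · have hi : i = 2*k := by omega
      subst hi
      obtain ⟨b, hbne, hC, hA⟩ := inv k
      have m0 : (2*k) % 2 = 0 := by omega
      have m1 : (2*k+1) % 2 = 1 := by omega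
      simp only [m0, m1, if_pos, if_neg, Nat.one_ne_zero, ite_false, ite_true]
      rw [hC, List.drop_left]
      exact pairB (hppc (2*k)) (hppa (2*k+1)) ⟨a (2*k), hC.symm⟩ hbne hA
    · have hi : i = 2*k+1 := by omega
      subst hi
      obtain ⟨b', hb'ne, hC', hA'⟩ := inv (k+1)
      have e1 : 2*(k+1) = 2*k+1+1 := by omega
      rw [e1] at hC' hA'
      have m1 : (2*k+1) % 2 = 1 := by omega
      have m0 : (2*k+1+1) % 2 = 0 := by omega
      simp only [m0, m1, if_pos, if_neg, Nat.one_ne_zero, ite_false, ite_true]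
      rw [hC', List.drop_left]
      exact pairA (hppc (2*k+1)) (hppa (2*k+1+1)) hC' hb'ne ⟨c (2*k+1+1+1), hA'.symm⟩

/-! ### Main equivalences -/

lemma self_ne_append {p u : List E} (hu : u ≠ []) : p ≠ p ++ u := by
  intro h
  have hl := congrArg List.length h
  rw [List.length_append] at hl
  exact hu (List.eq_nil_of_length_eq_zero (by omega))

/-- Part 1: `p` is elementary iff its successor `p₂` is co-elementary. -/
lemma part1 {p p2 : List E} (hp : M.IsPerfect p) (hp2 : M.IsPerfect p2)
    (h2 : M.PerfectPair p p2) : M.Elementary p ↔ M.CoElementary p2 := by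
  constructor
  · rintro ⟨-, hel⟩
    refine ⟨hp2, ?_⟩
    rintro ⟨u, huP, hupre, hune⟩
    obtain ⟨n, aseq, hn, ha0, hpera, hppa⟩ := id hp
    obtain ⟨m, bseq, hm, hb0, hperb, hppb⟩ := id huP
    have ha1 : aseq 1 = p2 :=
      succ_unique (show M.PerfectPair p (aseq 1) by rw [← ha0]; exact hppa 0) h2
    obtain ⟨w, hw⟩ := hupre
    have hwne : w ≠ [] := by
      rintro rfl
      rw [List.append_nil] at hw
      exact hune hw
    have h01 : aseq 1 = bseq 0 ++ w := by rw [ha1, hb0, hw]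
    have hP := concat hn hm hpera hperb hppa hppb hwne h01
    rw [ha0, hb0] at hP
    exact hel ⟨p ++ u, hP, List.prefix_append p u,
      self_ne_append (perfect_ne_nil huP)⟩
  · rintro ⟨-, hco⟩
    refine ⟨hp, ?_⟩
    rintro ⟨q, hqP, hqpre, hqne⟩
    obtain ⟨r, hr⟩ := hqpre
    have hrne : r ≠ [] := by
      rintro rfl
      rw [List.append_nil] at hr
      exact hqne hr
    obtain ⟨n, aseq, hn, ha0, hpera, hppa⟩ := id hp
    obtain ⟨mq, cseq, hmq, hc0, hperc, hppc⟩ := id hqP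
    have hPr := split hn hmq hpera hperc hppa hppc hrne (by rw [hc0, ha0]; exact hr.symm)
    have hS : p2 = r ++ cseq 1 :=
      lemS h2 (show M.PerfectPair (p ++ r) (cseq 1) by rw [hr, ← hc0]; exact hppc 0) hrne
    apply hco
    refine ⟨r, hPr, ⟨cseq 1, hS.symm⟩, ?_⟩
    intro h
    rw [h] at hS
    exact self_ne_append (pp_q_ne (hppc 0)) hS

end CSZAux

/-- if `(pₙ, p)` and `(p, p₂)` are perfect pairs, then
`p` elementary ↔ `p₂` co-elementary ↔ `pₙ` co-elementary. -/
theorem elementary_iff_next_coelementary {V E : Type} (M : MonomialData V E)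
    (pn p p2 : List E) (hpn : M.IsPerfect pn) (hp : M.IsPerfect p)
    (hp2 : M.IsPerfect p2)
    (h1 : M.PerfectPair pn p) (h2 : M.PerfectPair p p2) :
    (M.Elementary p ↔ M.CoElementary p2) ∧
    (M.Elementary p ↔ M.CoElementary pn) := by
  have hpart1 := CSZAux.part1 hp hp2 h2
  refine ⟨hpart1, ?_, ?_⟩
  · -- Elementary p → CoElementary pn
    intro hel
    refine ⟨hpn, ?_⟩
    rintro ⟨u, huP, hupre, hune⟩
    obtain ⟨w, hw⟩ := hupre
    have hwne : w ≠ [] := by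
      rintro rfl
      rw [List.append_nil] at hw
      exact hune hw
    obtain ⟨m, b, hm, hb0, hperb, hppb⟩ := id huP
    have hS : b 1 = w ++ p :=
      CSZAux.lemS (show M.PerfectPair u (b 1) by rw [← hb0]; exact hppb 0)
        (show M.PerfectPair (u ++ w) p by rw [hw]; exact h1) hwne
    have hD := CSZAux.lemD' h2
      (show M.PerfectPair (w ++ p) (b (1+1)) by rw [← hS]; exact hppb 1) hwne
    have hb2P : M.IsPerfect (b (1+1)) := CSZAux.isPerfect_shift hm hperb hppb (1+1)
    have hco := hpart1.mp hel
    exact hco.2 ⟨b (1+1), hb2P, hD.1, hD.2⟩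
  · -- CoElementary pn → Elementary p
    intro hco
    refine ⟨hp, ?_⟩
    rintro ⟨q, hqP, hqpre, hqne⟩
    obtain ⟨r, hr⟩ := hqpre
    have hrne : r ≠ [] := by
      rintro rfl
      rw [List.append_nil] at hr
      exact hqne hr
    obtain ⟨n, a, hn, ha0, hpera, hppa⟩ := id hp
    obtain ⟨mq, cs, hmq, hc0, hperc, hppc⟩ := id hqP
    have hPr := CSZAux.split hn hmq hpera hperc hppa hppc hrne
      (by rw [hc0, ha0]; exact hr.symm)
    have hS : p2 = r ++ cs 1 :=
      CSZAux.lemS h2 (show M.PerfectPair (p ++ r) (cs 1) by rw [hr, ← hc0]; exact hppc 0) hrne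
    have hrpre : r <+: p2 := ⟨cs 1, hS.symm⟩
    have hrne2 : r ≠ p2 := by
      intro h
      rw [h] at hS
      exact CSZAux.self_ne_append (CSZAux.pp_q_ne (hppc 0)) hS
    obtain ⟨mr, d, hmr, hd0, hperd, hppd⟩ := id hPr
    have e1 : 2*mr - 1 + 1 = 2*mr := by omega
    have e2 : 2*mr - 2 + 1 = 2*mr - 1 := by omega
    have hd2mr : d (2*mr) = r := by
      have := CSZAux.periodic_add_mul hperd 2 0
      rw [Nat.zero_add] at this
      rw [this, hd0]
    have hpair_pr : M.PerfectPair (d (2*mr-1)) r := by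
      have := hppd (2*mr-1)
      rwa [e1, hd2mr] at this
    obtain ⟨z, hzne, hzeq⟩ := CSZAux.lemD h2 hpair_pr hrpre hrne2
    have hpair2 : M.PerfectPair (d (2*mr-2)) (z ++ p) := by
      have := hppd (2*mr-2)
      rwa [e2, hzeq] at this
    have hL5 : pn = d (2*mr-2) ++ z := CSZAux.lemL5 hpair2 h1 hzne
    apply hco.2
    refine ⟨d (2*mr-2), CSZAux.isPerfect_shift hmr hperd hppd _, ⟨z, hL5.symm⟩, ?_⟩
    intro h
    rw [h] at hL5
    exact CSZAux.self_ne_append hzne hL5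
end
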